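/- arXiv:2109.00404 — 2 statements merged into one kernel-verified Lean document; each statement's English description precedes it below -/
import Mathlib

section
/- In the model of Figure 2(b) with X_s = ε_s, X_v = −0.2·X_s + ε_v, X_w = −0.2·X_s + ε_w, X_t = −0.1·X_s − 0.2·X_v − 0.2·X_w + ε_t, where ε_s, ε_v, ε_w, ε_t are pairwise uncorrelated, mean-0, square-integrable, and Var(ε_s) = 1, one has cov(X_s, X_t) = −0.02, so that |cov(X_s, X_t)| = 0.02 < 0.2 = min of the absolute values of all edge coefficients on the directed paths s → v → t and s → w → t, even though the direct-edge coefficient β_ts = −0.1 is nonzero. Hence the transitive-reduction criterion (which removes the edge s → t whenever the minimum absolute edge coefficient along every alternative directed path exceeds |cov(X_s, X_t)|) incorrectly removes the true direct edge s → t. -/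
/-
Covariances with `X_s` can be traced along the directed paths out of `s`: the direct edge
contributes `β_ts · Var ε_s = -0.1`, and each of the paths `s → v → t`, `s → w → t`
contributes `(-0.2) · (-0.2) = 0.04`. The two indirect contributions nearly cancel the direct
one, leaving `cov(X_s, X_t) = -0.02`, much smaller in absolute value than every edge
coefficient on the alternative paths.
-/

open MeasureTheory

/-- Mean (expectation) of a real random variable. -/
noncomputable def mean {Ω : Type*} [MeasurableSpace Ω] (μ : Measure Ω) (X : Ω → ℝ) : ℝ :=
  ∫ ω, X ω ∂μ

/-- Covariance `E[(X − E X)(Y − E Y)]`. -/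
noncomputable def cov {Ω : Type*} [MeasurableSpace Ω] (μ : Measure Ω) (X Y : Ω → ℝ) : ℝ :=
  ∫ ω, (X ω - mean μ X) * (Y ω - mean μ Y) ∂μ

/-- Variance `Var X = cov(X, X)`. -/
noncomputable def Var {Ω : Type*} [MeasurableSpace Ω] (μ : Measure Ω) (X : Ω → ℝ) : ℝ :=
  cov μ X X

/-- Standard deviation `sd X = sqrt (Var X)`. -/
noncomputable def sd {Ω : Type*} [MeasurableSpace Ω] (μ : Measure Ω) (X : Ω → ℝ) : ℝ :=
  Real.sqrt (Var μ X)

/-- Pearson correlation `cor(X,Y) = cov(X,Y)/(sd X · sd Y)`. -/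
noncomputable def cor {Ω : Type*} [MeasurableSpace Ω] (μ : Measure Ω) (X Y : Ω → ℝ) : ℝ :=
  cov μ X Y / (sd μ X * sd μ Y)

open ProbabilityTheory

section CovarianceAlgebra

variable {Ω : Type*} [MeasurableSpace Ω] {μ : Measure Ω} {X Y Z : Ω → ℝ}
  [IsFiniteMeasure μ]

theorem cov_const_mul_add_right (hX : MemLp X 2 μ) (hY : MemLp Y 2 μ) (hZ : MemLp Z 2 μ)
    (a : ℝ) : cov μ X (fun ω => a * Y ω + Z ω) = a * cov μ X Y + cov μ X Z := by
  show covariance X (a • Y + Z) μ = _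
  rw [covariance_add_right hX (hY.const_smul a) hZ, covariance_smul_right]
  rfl

theorem cov_const_mul_add_const_mul_add_const_mul_add_right {Y₁ Y₂ Y₃ : Ω → ℝ}
    (hX : MemLp X 2 μ) (hY₁ : MemLp Y₁ 2 μ) (hY₂ : MemLp Y₂ 2 μ) (hY₃ : MemLp Y₃ 2 μ)
    (hZ : MemLp Z 2 μ) (a b c : ℝ) :
    cov μ X (fun ω => a * Y₁ ω + b * Y₂ ω + c * Y₃ ω + Z ω) =
      a * cov μ X Y₁ + b * cov μ X Y₂ + c * cov μ X Y₃ + cov μ X Z := by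
  have h₁ := hY₁.const_smul a
  have h₂ := hY₂.const_smul b
  have h₃ := hY₃.const_smul c
  show covariance X (a • Y₁ + b • Y₂ + c • Y₃ + Z) μ = _
  rw [covariance_add_right hX ((h₁.add h₂).add h₃) hZ, covariance_add_right hX (h₁.add h₂) h₃,
    covariance_add_right hX h₁ h₂, covariance_smul_right, covariance_smul_right,
    covariance_smul_right]
  rfl

end CovarianceAlgebra

theorem stmt_8_general {Ω : Type*} [MeasurableSpace Ω] (μ : Measure Ω) [IsProbabilityMeasure μ]
    (εs εv εw εt Xs Xv Xw Xt : Ω → ℝ)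
    (hεs2 : MemLp εs 2 μ) (hεv2 : MemLp εv 2 μ) (hεw2 : MemLp εw 2 μ)
    (hεt2 : MemLp εt 2 μ)
    (hvs : Var μ εs = 1)
    (hsv : cov μ εs εv = 0) (hsw : cov μ εs εw = 0) (hst : cov μ εs εt = 0)
    (hXs : Xs = εs)
    (hXv : Xv = fun ω => -0.2 * Xs ω + εv ω)
    (hXw : Xw = fun ω => -0.2 * Xs ω + εw ω)
    (hXt : Xt = fun ω => -0.1 * Xs ω + -0.2 * Xv ω + -0.2 * Xw ω + εt ω) :
    cov μ Xs Xt = -0.02 ∧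
    |cov μ Xs Xt| = 0.02 ∧
    -- the minimum of the absolute values of the edge coefficients on the two
    -- directed paths s → v → t and s → w → t is 0.2, and it exceeds |cov(Xs, Xt)|,
    -- so criterion (10) removes the edge s → t even though β_ts = −0.1 ≠ 0
    |cov μ Xs Xt| < min (min |(-0.2 : ℝ)| |(-0.2 : ℝ)|) (min |(-0.2 : ℝ)| |(-0.2 : ℝ)|) ∧
    (-0.1 : ℝ) ≠ 0 := by
  subst hXs
  have hXv2 : MemLp Xv 2 μ := hXv ▸ (hεs2.const_mul _).add hεv2
  have hXw2 : MemLp Xw 2 μ := hXw ▸ (hεs2.const_mul _).add hεw2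
  have hXsXv : cov μ Xs Xv = -0.2 := by
    rw [hXv, cov_const_mul_add_right hεs2 hεs2 hεv2, ← Var, hvs, hsv]; norm_num
  have hXsXw : cov μ Xs Xw = -0.2 := by
    rw [hXw, cov_const_mul_add_right hεs2 hεs2 hεw2, ← Var, hvs, hsw]; norm_num
  have hcov : cov μ Xs Xt = -0.02 := by
    rw [hXt, cov_const_mul_add_const_mul_add_const_mul_add_right hεs2 hεs2 hXv2 hXw2 hεt2,
      ← Var, hvs, hXsXv, hXsXw, hst]
    norm_num
  refine ⟨hcov, ?_⟩
  rw [hcov]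
  norm_num

theorem stmt_8 {Ω : Type*} [MeasurableSpace Ω] (μ : Measure Ω) [IsProbabilityMeasure μ]
    (εs εv εw εt Xs Xv Xw Xt : Ω → ℝ)
    (hεs2 : MemLp εs 2 μ) (hεv2 : MemLp εv 2 μ) (hεw2 : MemLp εw 2 μ)
    (hεt2 : MemLp εt 2 μ)
    (hms : mean μ εs = 0) (hmv : mean μ εv = 0) (hmw : mean μ εw = 0)
    (hmt : mean μ εt = 0)
    (hvs : Var μ εs = 1)
    (hsv : cov μ εs εv = 0) (hsw : cov μ εs εw = 0) (hst : cov μ εs εt = 0)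
    (hvw : cov μ εv εw = 0) (hvt : cov μ εv εt = 0) (hwt : cov μ εw εt = 0)
    (hXs : Xs = εs)
    (hXv : Xv = fun ω => -0.2 * Xs ω + εv ω)
    (hXw : Xw = fun ω => -0.2 * Xs ω + εw ω)
    (hXt : Xt = fun ω => -0.1 * Xs ω + -0.2 * Xv ω + -0.2 * Xw ω + εt ω) :
    cov μ Xs Xt = -0.02 ∧
    |cov μ Xs Xt| = 0.02 ∧
    -- the minimum of the absolute values of the edge coefficients on the two
    -- directed paths s → v → t and s → w → t is 0.2, and it exceeds |cov(Xs, Xt)|,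
    -- so criterion (10) removes the edge s → t even though β_ts = −0.1 ≠ 0
    |cov μ Xs Xt| < min (min |(-0.2 : ℝ)| |(-0.2 : ℝ)|) (min |(-0.2 : ℝ)| |(-0.2 : ℝ)|) ∧
    (-0.1 : ℝ) ≠ 0 :=
  stmt_8_general μ εs εv εw εt Xs Xv Xw Xt hεs2 hεv2 hεw2 hεt2 hvs hsv hsw hst hXs hXv hXw hXt
end

section
/- Let X_1, …, X_k (k ≥ 3) be square-integrable real random variables forming a standardized chain: each X_j has mean 0 and variance 1, and X_{j+1} = ρ_j·X_j + ε_{j+1} for real ρ_j, where each ε_{j+1} has mean 0 and is uncorrelated with X_1, …, X_j. Then cor(X_1, X_k) = ρ_1·ρ_2·⋯·ρ_{k−1}. Moreover, if 0 < |ρ_j| < 1 for every j, then |ρ_j| > |cor(X_1, X_k)| for every j; that is, the transitive-reduction criterion min_j |ρ_j| > |cor(X_1, X_k)| necessarily holds whenever the correlation between the endpoints is induced purely by the directed chain. -/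
open MeasureTheory

/-!
Each step of the chain is linear in the previous variable plus noise uncorrelated with `X 0`,
so bilinearity of the covariance gives `cov(X 0, X (j + 1)) = ρ j · cov(X 0, X j)`; with unit
variances the correlation is the covariance, hence the product of the `ρ j`. A product of at
least two factors of absolute value in `(0, 1)` is strictly smaller in absolute value than each
of its factors.
-/

open ProbabilityTheory Finset

lemma cov_eq_covariance {Ω : Type*} [MeasurableSpace Ω] (μ : Measure Ω) (X Y : Ω → ℝ) :
    cov μ X Y = cov[X, Y; μ] :=
  rfl

lemma cor_eq_cov_of_var_eq_one {Ω : Type*} [MeasurableSpace Ω] {μ : Measure Ω} {X Y : Ω → ℝ}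
    (hX : Var μ X = 1) (hY : Var μ Y = 1) : cor μ X Y = cov μ X Y := by
  simp [cor, sd, hX, hY]

lemma covariance_const_mul_add_of_covariance_eq_zero {Ω : Type*} [MeasurableSpace Ω]
    {μ : Measure Ω} [IsFiniteMeasure μ] {Z Y E : Ω → ℝ} (c : ℝ)
    (hZ : MemLp Z 2 μ) (hY : MemLp Y 2 μ) (hE : MemLp E 2 μ) (hZE : cov[Z, E; μ] = 0) :
    cov[Z, fun ω => c * Y ω + E ω; μ] = c * cov[Z, Y; μ] := by
  rw [show (fun ω => c * Y ω + E ω) = (fun ω => c * Y ω) + E from rfl,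
    covariance_add_right hZ (hY.const_mul c) hE, covariance_const_mul_right, hZE, add_zero]

lemma cov_chain_eq_mul_prod {Ω : Type*} [MeasurableSpace Ω] {μ : Measure Ω} [IsFiniteMeasure μ]
    {k : ℕ} {X ε : ℕ → Ω → ℝ} {ρ : ℕ → ℝ}
    (hX2 : ∀ j < k, MemLp (X j) 2 μ) (hε2 : ∀ j < k, MemLp (ε j) 2 μ)
    (hchain : ∀ j, j + 1 < k → X (j + 1) = fun ω => ρ j * X j ω + ε (j + 1) ω)
    (hεunc : ∀ j, j + 1 < k → cov μ (ε (j + 1)) (X 0) = 0) :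
    ∀ j < k, cov μ (X 0) (X j) = cov μ (X 0) (X 0) * ∏ i ∈ range j, ρ i := by
  intro j
  induction j with
  | zero => simp
  | succ j ih =>
    intro hj
    have hunc : cov[X 0, ε (j + 1); μ] = 0 := by
      rw [covariance_comm]; exact hεunc j hj
    rw [cov_eq_covariance, hchain j hj, covariance_const_mul_add_of_covariance_eq_zero _
      (hX2 0 (by omega)) (hX2 j (by omega)) (hε2 (j + 1) hj) hunc, ← cov_eq_covariance,
      ih (by omega), prod_range_succ]
    ring

lemma abs_prod_lt_abs_of_mem {ι : Type*} {s : Finset ι} {f : ι → ℝ} {j : ι}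
    (hs : s.Nontrivial) (hj : j ∈ s) (hf : ∀ i ∈ s, 0 < |f i| ∧ |f i| < 1) :
    |∏ i ∈ s, f i| < |f j| := by
  classical
  have hrest : ∏ i ∈ s.erase j, |f i| < 1 := by
    simpa using prod_lt_prod_of_nonempty (g := fun _ => (1 : ℝ))
      (fun i hi => (hf i (mem_of_mem_erase hi)).1) (fun i hi => (hf i (mem_of_mem_erase hi)).2)
      hs.erase_nonempty
  rw [abs_prod, ← mul_prod_erase s _ hj]
  exact mul_lt_of_lt_one_right (hf j hj).1 hrest

theorem stmt_9_general {Ω : Type*} [MeasurableSpace Ω] (μ : Measure Ω) [IsProbabilityMeasure μ]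
    (k : ℕ) (hk : 3 ≤ k) (X ε : ℕ → Ω → ℝ) (ρ : ℕ → ℝ)
    (hX2 : ∀ j < k, MemLp (X j) 2 μ) (hε2 : ∀ j < k, MemLp (ε j) 2 μ)
    (hXvar : ∀ j < k, Var μ (X j) = 1)
    (hchain : ∀ j, j + 1 < k → X (j + 1) = fun ω => ρ j * X j ω + ε (j + 1) ω)
    (hεunc : ∀ j, j + 1 < k → ∀ i ≤ j, cov μ (ε (j + 1)) (X i) = 0) :
    cor μ (X 0) (X (k - 1)) = ∏ j ∈ Finset.range (k - 1), ρ j ∧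
    ((∀ j < k - 1, 0 < |ρ j| ∧ |ρ j| < 1) →
      ∀ j < k - 1, |cor μ (X 0) (X (k - 1))| < |ρ j|) := by
  have hcov := cov_chain_eq_mul_prod hX2 hε2 hchain (fun j hj => hεunc j hj 0 j.zero_le)
    (k - 1) (by omega)
  have hcor : cor μ (X 0) (X (k - 1)) = ∏ j ∈ range (k - 1), ρ j := by
    have hvar0 : Var μ (X 0) = 1 := hXvar 0 (by omega)
    rw [cor_eq_cov_of_var_eq_one hvar0 (hXvar (k - 1) (by omega)), hcov, ← Var, hvar0, one_mul]
  refine ⟨hcor, fun hρ j hj => ?_⟩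
  rw [hcor]
  exact abs_prod_lt_abs_of_mem (one_lt_card_iff_nontrivial.mp (by rw [card_range]; omega))
    (mem_range.mpr hj) (fun i hi => hρ i (mem_range.mp hi))

theorem stmt_9 {Ω : Type*} [MeasurableSpace Ω] (μ : Measure Ω) [IsProbabilityMeasure μ]
    (k : ℕ) (hk : 3 ≤ k) (X ε : ℕ → Ω → ℝ) (ρ : ℕ → ℝ)
    (hX2 : ∀ j < k, MemLp (X j) 2 μ) (hε2 : ∀ j < k, MemLp (ε j) 2 μ)
    (hXmean : ∀ j < k, mean μ (X j) = 0) (hXvar : ∀ j < k, Var μ (X j) = 1)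
    (hchain : ∀ j, j + 1 < k → X (j + 1) = fun ω => ρ j * X j ω + ε (j + 1) ω)
    (hεmean : ∀ j, j + 1 < k → mean μ (ε (j + 1)) = 0)
    (hεunc : ∀ j, j + 1 < k → ∀ i ≤ j, cov μ (ε (j + 1)) (X i) = 0) :
    cor μ (X 0) (X (k - 1)) = ∏ j ∈ Finset.range (k - 1), ρ j ∧
    ((∀ j < k - 1, 0 < |ρ j| ∧ |ρ j| < 1) →
      ∀ j < k - 1, |cor μ (X 0) (X (k - 1))| < |ρ j|) :=
  stmt_9_general μ k hk X ε ρ hX2 hε2 hXvar hchain hεunc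
end
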